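/- A finite simple graph G is perfect if and only if the set of x ∈ ℝ^V satisfying the box and clique constraints of G equals STAB(G), the convex hull of the 0/1 incidence vectors of the stable sets of G. -/

import Mathlib

open Finset SimpleGraph

namespace TPerfection

variable {V : Type*}

/-- A stable (independent) set of vertices: pairwise non-adjacent. -/
def IsStableSet (G : SimpleGraph V) (S : Finset V) : Prop :=
  ∀ u ∈ S, ∀ v ∈ S, ¬ G.Adj u v

/-- STAB(G): convex hull of incidence vectors of stable sets. -/
def stabPolytope (G : SimpleGraph V) [Fintype V] [DecidableEq V] : Set (V → ℝ) :=
  convexHull ℝ { x | ∃ S : Finset V, IsStableSet G S ∧ x = fun v => if v ∈ S then (1 : ℝ) else 0 }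

/-- `c` is an induced (chordless) cycle of `G`. -/
def IsInducedCycle (G : SimpleGraph V) {u : V} (c : G.Walk u u) : Prop :=
  c.IsCycle ∧ ∀ x y : V, x ∈ c.support → y ∈ c.support → G.Adj x y → s(x, y) ∈ c.edges

def boxConstraints (x : V → ℝ) : Prop := ∀ v, 0 ≤ x v ∧ x v ≤ 1

def edgeConstraints (G : SimpleGraph V) (x : V → ℝ) : Prop :=
  ∀ u v : V, G.Adj u v → x u + x v ≤ 1

def cliqueConstraints (G : SimpleGraph V) (x : V → ℝ) : Prop :=
  ∀ K : Finset V, G.IsClique (K : Set V) → ∑ v ∈ K, x v ≤ 1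

def oddCycleConstraints [DecidableEq V] (G : SimpleGraph V) (x : V → ℝ) : Prop :=
  ∀ (u : V) (c : G.Walk u u), IsInducedCycle G c → Odd c.length →
    ∑ v ∈ c.support.toFinset, x v ≤ ((c.length : ℝ) - 1) / 2

/-- Solution set of box, edge and odd-cycle constraints. -/
def tPolytope (G : SimpleGraph V) [DecidableEq V] : Set (V → ℝ) :=
  { x | boxConstraints x ∧ edgeConstraints G x ∧ oddCycleConstraints G x }

/-- Solution set of box, clique and odd-cycle constraints. -/
def hPolytope (G : SimpleGraph V) [DecidableEq V] : Set (V → ℝ) :=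
  { x | boxConstraints x ∧ cliqueConstraints G x ∧ oddCycleConstraints G x }

/-- Solution set of box and clique constraints. -/
def qstabPolytope (G : SimpleGraph V) : Set (V → ℝ) :=
  { x | boxConstraints x ∧ cliqueConstraints G x }

def TPerfect (G : SimpleGraph V) [Fintype V] [DecidableEq V] : Prop :=
  tPolytope G = stabPolytope G

def HPerfect (G : SimpleGraph V) [Fintype V] [DecidableEq V] : Prop :=
  hPolytope G = stabPolytope G

/-- The clique number, as an extended natural number. -/
noncomputable def cliqueNumber (G : SimpleGraph V) : ℕ∞ :=
  sSup ((fun n : ℕ => (n : ℕ∞)) '' { n | ∃ K : Finset V, G.IsNClique n K })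

/-- A graph is perfect if every induced subgraph has chromatic number equal to
clique number. -/
def IsPerfect (G : SimpleGraph V) : Prop :=
  ∀ S : Set V, (G.induce S).chromaticNumber = cliqueNumber (G.induce S)

/-- `G` is a loose wheel with hub `hub` and rim `c`: `c` is a cycle, `hub` lies outside
of it and has at least three neighbours on it, and the rim together with the hub
comprise all vertices and edges of `G`. -/
structure IsLooseWheel (G : SimpleGraph V) (hub : V) {u : V} (c : G.Walk u u) : Prop where
  isCycle : c.IsCycle
  hub_not_mem : hub ∉ c.support
  spokes : ∃ w₁ w₂ w₃ : V, w₁ ∈ c.support ∧ w₂ ∈ c.support ∧ w₃ ∈ c.support ∧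
    w₁ ≠ w₂ ∧ w₁ ≠ w₃ ∧ w₂ ≠ w₃ ∧ G.Adj hub w₁ ∧ G.Adj hub w₂ ∧ G.Adj hub w₃
  vertex_cover : ∀ w : V, w ∈ c.support ∨ w = hub
  edge_cover : ∀ x y : V, G.Adj x y → s(x, y) ∈ c.edges ∨ x = hub ∨ y = hub

/-- A segment of a loose wheel: a path of the rim joining two neighbours of the hub
and containing no other neighbour of the hub. -/
def IsSegment (G : SimpleGraph V) (hub : V) {u : V} (c : G.Walk u u)
    {a b : V} (p : G.Walk a b) : Prop :=
  p.IsPath ∧ a ≠ b ∧ G.Adj hub a ∧ G.Adj hub b ∧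
    (∀ e ∈ p.edges, e ∈ c.edges) ∧
    (∀ w ∈ p.support, G.Adj hub w → w = a ∨ w = b)

/-- `G` is a loose odd wheel: a loose wheel with odd rim having at least three
(pairwise distinct, hence pairwise edge-disjoint) segments of odd length. -/
def IsLooseOddWheel [DecidableEq V] (G : SimpleGraph V) : Prop :=
  ∃ (hub u : V) (c : G.Walk u u), IsLooseWheel G hub c ∧ Odd c.length ∧
    ∃ (a₁ b₁ : V) (p₁ : G.Walk a₁ b₁) (a₂ b₂ : V) (p₂ : G.Walk a₂ b₂)
      (a₃ b₃ : V) (p₃ : G.Walk a₃ b₃),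
      IsSegment G hub c p₁ ∧ IsSegment G hub c p₂ ∧ IsSegment G hub c p₃ ∧
      Odd p₁.length ∧ Odd p₂.length ∧ Odd p₃.length ∧
      Disjoint p₁.edges.toFinset p₂.edges.toFinset ∧
      Disjoint p₁.edges.toFinset p₃.edges.toFinset ∧
      Disjoint p₂.edges.toFinset p₃.edges.toFinset

/-- The neighbourhood of `v` is a stable set. -/
def StableNeighborhood (G : SimpleGraph V) (v : V) : Prop :=
  ∀ x y : V, G.Adj v x → G.Adj v y → ¬ G.Adj x y

/-- The t-contraction of `G` at `v`: delete `{v} ∪ N(v)` and add a new vertex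
(`none`) adjacent exactly to the remaining vertices having a neighbour in `N(v)`. -/
def tContract (G : SimpleGraph V) (v : V) :
    SimpleGraph (Option { w : V // w ≠ v ∧ ¬ G.Adj v w }) where
  Adj x y :=
    match x, y with
    | none, none => False
    | none, some b => ∃ n, G.Adj v n ∧ G.Adj b.1 n
    | some a, none => ∃ n, G.Adj v n ∧ G.Adj a.1 n
    | some a, some b => G.Adj a.1 b.1
  symm := by
    constructor
    rintro (_ | a) (_ | b) h
    · exact h
    · exact h
    · exact h
    · exact h.symm
  loopless := by
    constructor
    rintro (_ | a) h
    · exact h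
    · exact G.loopless.1 _ h

/-- The wheel with hub `none` and rim the cycle of length `k` on `Fin k`. -/
def wheelGraph (k : ℕ) : SimpleGraph (Option (Fin k)) where
  Adj x y :=
    match x, y with
    | none, none => False
    | none, some _ => True
    | some _, none => True
    | some i, some j => i ≠ j ∧ ((i.1 + 1) % k = j.1 ∨ (j.1 + 1) % k = i.1)
  symm := by
    constructor
    rintro (_ | i) (_ | j) h
    · exact h
    · trivial
    · trivial
    · exact ⟨h.1.symm, h.2.symm⟩
  loopless := by
    constructor
    rintro (_ | i) h
    · exact h
    · exact h.1 rfl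

/-- One step of t-contraction between (isomorphism classes of) graphs. -/
def TContractStep : (Σ α : Type, SimpleGraph α) → (Σ α : Type, SimpleGraph α) → Prop :=
  fun G H => ∃ v : G.1, StableNeighborhood G.2 v ∧ Nonempty (H.2 ≃g tContract G.2 v)

/-!
Both conditions are equivalent to the existence of weighted colourings: for every weight
`p : V → ℕ` whose clique weights are at most `q`, some `q` stable sets cover each vertex `v`
exactly `p v` times.

For a perfect graph, 0/1 weights are handled by colouring an induced subgraph, and a weight
`p u ≥ 2` is reduced by replication: in a weighted colouring of `p - 𝟙_u`, a class through `u`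
meets every clique of weight `q`, so it can be split off and the rest coloured with `q - 1`
colours. A weighted colouring writes `p / q` as a convex combination of stable sets, and
these rational points are dense in QSTAB.

Conversely, if QSTAB = STAB then `p / q` lies in STAB, and the maximum principle for the sum of
the constraints of the cliques of weight `q` yields a stable set meeting all of them; splitting
such stable sets off one at a time gives a weighted colouring.
-/

lemma IsStableSet.card_inter_le_one [DecidableEq V] {G : SimpleGraph V} {K T : Finset V}
    (hT : IsStableSet G T) (hK : G.IsClique (K : Set V)) : #(K ∩ T) ≤ 1 := by
  rw [card_le_one]
  intro a ha b hb
  rw [mem_inter] at ha hb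
  by_contra hab
  exact hT a ha.2 b hb.2 (hK ha.1 hb.1 hab)

lemma sum_tsub_lt_sum [Fintype V] {p f : V → ℕ} (hf : ∀ v, f v ≤ p v) {u : V} (hu : f u ≠ 0) :
    ∑ v, (p - f) v < ∑ v, p v :=
  sum_lt_sum (fun _ _ => tsub_le_self)
    ⟨u, mem_univ u, Nat.sub_lt (Nat.pos_of_ne_zero hu |>.trans_le (hf u)) (Nat.pos_of_ne_zero hu)⟩

def IsCliqueWeightBound (G : SimpleGraph V) (p : V → ℕ) (q : ℕ) : Prop :=
  ∀ K : Finset V, G.IsClique (K : Set V) → ∑ v ∈ K, p v ≤ q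

structure IsWeightedColoring [DecidableEq V] (G : SimpleGraph V) (p : V → ℕ) {q : ℕ}
    (A : Fin q → Finset V) : Prop where
  isStableSet : ∀ i, IsStableSet G (A i)
  card_filter_mem : ∀ v, #{i | v ∈ A i} = p v

def WeightedColorable [DecidableEq V] (G : SimpleGraph V) (p : V → ℕ) (q : ℕ) : Prop :=
  ∃ A : Fin q → Finset V, IsWeightedColoring G p A

def HasWeightedColorings [DecidableEq V] (G : SimpleGraph V) : Prop :=
  ∀ p q, IsCliqueWeightBound G p q → WeightedColorable G p q

structure IsTightCliqueTransversal [DecidableEq V] (G : SimpleGraph V) (p : V → ℕ) (q : ℕ)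
    (T : Finset V) : Prop where
  isStableSet : IsStableSet G T
  ne_zero : ∀ v ∈ T, p v ≠ 0
  inter_nonempty : ∀ K : Finset V, G.IsClique (K : Set V) → ∑ v ∈ K, p v = q → (K ∩ T).Nonempty

section WeightedColoring

variable [DecidableEq V] {G : SimpleGraph V} {p : V → ℕ} {q : ℕ} {A : Fin q → Finset V}

lemma IsWeightedColoring.sum_card_inter (hA : IsWeightedColoring G p A) (K : Finset V) :
    ∑ i, #(K ∩ A i) = ∑ v ∈ K, p v := by
  simp_rw [← filter_mem_eq_inter, card_filter, ← hA.card_filter_mem, card_filter]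
  exact Finset.sum_comm

lemma IsWeightedColoring.inter_nonempty (hA : IsWeightedColoring G p A) {K : Finset V}
    (hK : G.IsClique (K : Set V)) (hKq : ∑ v ∈ K, p v = q) (i : Fin q) : (K ∩ A i).Nonempty := by
  rw [nonempty_iff_ne_empty]
  intro hi
  have : ∑ j, #(K ∩ A j) < ∑ _j : Fin q, 1 :=
    sum_lt_sum (fun j _ => (hA.isStableSet j).card_inter_le_one hK) ⟨i, mem_univ i, by simp [hi]⟩
  simp [hA.sum_card_inter, hKq] at this

lemma IsWeightedColoring.exists_mem (hA : IsWeightedColoring G p A) {v : V} (hv : p v ≠ 0) :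
    ∃ i, v ∈ A i := by
  obtain ⟨i, hi⟩ := card_pos.1 (hA.card_filter_mem v ▸ Nat.pos_of_ne_zero hv)
  exact ⟨i, by simpa using hi⟩

lemma IsWeightedColoring.cons {T : Finset V}
    (hA : IsWeightedColoring G (p - (T : Set V).indicator 1) A) (hT : IsStableSet G T)
    (hTp : ∀ v ∈ T, p v ≠ 0) : IsWeightedColoring G p (Fin.cons T A : Fin (q + 1) → Finset V) where
  isStableSet := Fin.cases hT hA.isStableSet
  card_filter_mem v := by
    rw [card_filter, Fin.sum_univ_succ]
    simp only [Fin.cons_zero, Fin.cons_succ, ← card_filter, hA.card_filter_mem, Pi.sub_apply]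
    by_cases hvT : v ∈ T
    · have := hTp v hvT
      simp [hvT]
      omega
    · simp [hvT]

/-- A clique of weight `q` either contains `u` or has weight `q` also for `p - 𝟙_u`. -/
lemma IsWeightedColoring.isTightCliqueTransversal {u : V}
    (hA : IsWeightedColoring G (p - Pi.single u 1) A) {i : Fin q} (hu : u ∈ A i) :
    IsTightCliqueTransversal G p q (A i) where
  isStableSet := hA.isStableSet i
  ne_zero v hv := by
    have hpos : 0 < #{j | v ∈ A j} := card_pos.2 ⟨i, by simpa using hv⟩
    rw [hA.card_filter_mem] at hpos
    simp only [Pi.sub_apply] at hpos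
    omega
  inter_nonempty K hK hKq := by
    by_cases huK : u ∈ K
    · exact ⟨u, mem_inter.2 ⟨huK, hu⟩⟩
    · refine hA.inter_nonempty hK ?_ i
      rw [← hKq]
      refine sum_congr rfl fun v hv => ?_
      simp [ne_of_mem_of_not_mem hv huK]

lemma IsTightCliqueTransversal.indicator_le {T : Finset V} (hT : IsTightCliqueTransversal G p q T)
    (v : V) : (T : Set V).indicator 1 v ≤ p v := by
  by_cases hv : v ∈ T
  · simpa [hv, Nat.one_le_iff_ne_zero] using hT.ne_zero v hv
  · simp [hv]

lemma IsCliqueWeightBound.sub_indicator {T : Finset V} (hp : IsCliqueWeightBound G p (q + 1))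
    (hT : IsTightCliqueTransversal G p (q + 1) T) :
    IsCliqueWeightBound G (p - (T : Set V).indicator 1) q := by
  intro K hK
  have hsum : ∑ v ∈ K, (T : Set V).indicator (1 : V → ℕ) v = #(K ∩ T) := by
    simp [Set.indicator_apply]
  simp only [Pi.sub_apply]
  rw [sum_tsub_distrib K fun v _ => hT.indicator_le v, hsum]
  by_cases hKq : ∑ v ∈ K, p v = q + 1
  · have := (hT.inter_nonempty K hK hKq).card_pos
    omega
  · have := hp K hK
    omega

lemma WeightedColorable.of_isTightCliqueTransversal {T : Finset V}
    (hT : IsTightCliqueTransversal G p (q + 1) T)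
    (h : WeightedColorable G (p - (T : Set V).indicator 1) q) : WeightedColorable G p (q + 1) :=
  let ⟨_, hB⟩ := h
  ⟨_, hB.cons hT.isStableSet hT.ne_zero⟩

lemma HasWeightedColorings.of_exists_isTightCliqueTransversal
    (h : ∀ p q, IsCliqueWeightBound G p (q + 1) → ∃ T, IsTightCliqueTransversal G p (q + 1) T) :
    HasWeightedColorings G := by
  intro p q
  induction q generalizing p with
  | zero =>
    intro hp
    refine ⟨Fin.elim0, ⟨fun i => i.elim0, fun v => ?_⟩⟩
    have := hp {v} (by simp)
    simp_all
  | succ r ih =>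
    intro hp
    obtain ⟨T, hT⟩ := h p r hp
    exact .of_isTightCliqueTransversal hT (ih _ (hp.sub_indicator hT))

variable [Fintype V]

lemma WeightedColorable.of_two_le
    (ih : ∀ p' : V → ℕ, ∑ v, p' v < ∑ v, p v →
      ∀ q, IsCliqueWeightBound G p' q → WeightedColorable G p' q)
    {u : V} (hu : 2 ≤ p u) (hp : IsCliqueWeightBound G p q) : WeightedColorable G p q := by
  obtain ⟨r, rfl⟩ : ∃ r, q = r + 1 :=
    Nat.exists_eq_add_one.2 ((show 0 < p u by omega).trans_le (by simpa using hp {u} (by simp)))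
  have hsingle : ∀ v, Pi.single (M := fun _ => ℕ) u 1 v ≤ p v := fun v => by
    by_cases hv : v = u <;> simp [hv]
    omega
  obtain ⟨A, hA⟩ := ih _ (sum_tsub_lt_sum hsingle (u := u) (by simp)) (r + 1)
    fun K hK => (sum_le_sum fun v _ => tsub_le_self).trans (hp K hK)
  obtain ⟨i, hi⟩ := hA.exists_mem (v := u) (by simp; omega)
  have hT := hA.isTightCliqueTransversal hi
  exact .of_isTightCliqueTransversal hT
    (ih _ (sum_tsub_lt_sum hT.indicator_le (u := u) (by simp [hi])) r (hp.sub_indicator hT))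

lemma HasWeightedColorings.of_indicator
    (h : ∀ (S : Set V) q, IsCliqueWeightBound G (S.indicator 1) q →
      WeightedColorable G (S.indicator 1) q) :
    HasWeightedColorings G := by
  intro p
  induction hN : ∑ v, p v using Nat.strong_induction_on generalizing p with
  | _ N ih =>
    intro q hp
    by_cases hp1 : ∀ v, p v ≤ 1
    · obtain ⟨S, rfl⟩ : ∃ S : Set V, p = S.indicator 1 := ⟨{v | p v = 1}, funext fun v => by
        have := hp1 v
        by_cases hv : p v = 1 <;> simp [hv]
        omega⟩
      exact h S q hp
    · push Not at hp1
      obtain ⟨u, hu⟩ := hp1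
      exact .of_two_le (fun p' hp' => ih _ (hN ▸ hp') p' rfl) hu hp

end WeightedColoring

section Polytope

open Filter Topology

variable {G : SimpleGraph V}

lemma convex_qstabPolytope : Convex ℝ (qstabPolytope G) := by
  intro x hx y hy a b ha hb hab
  refine ⟨fun v => ⟨?_, ?_⟩, fun K hK => ?_⟩
  · simp only [Pi.add_apply, Pi.smul_apply, smul_eq_mul]
    nlinarith [hx.1 v, hy.1 v]
  · simp only [Pi.add_apply, Pi.smul_apply, smul_eq_mul]
    nlinarith [hx.1 v, hy.1 v]
  · simp only [Pi.add_apply, Pi.smul_apply, smul_eq_mul, sum_add_distrib, ← mul_sum]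
    nlinarith [hx.2 K hK, hy.2 K hK]

lemma div_mem_qstabPolytope {p : V → ℕ} {q : ℕ} (hp : IsCliqueWeightBound G p q) :
    (fun v => (p v : ℝ) / q) ∈ qstabPolytope G := by
  refine ⟨fun v => ⟨by positivity, div_le_one_of_le₀ ?_ q.cast_nonneg⟩, fun K hK => ?_⟩
  · exact_mod_cast (sum_singleton p v).symm.trans_le (hp {v} (by simp))
  · rw [← sum_div]
    exact div_le_one_of_le₀ (by exact_mod_cast hp K hK) q.cast_nonneg

variable [Fintype V] [DecidableEq V]

lemma stabPolytope_subset_qstabPolytope : stabPolytope G ⊆ qstabPolytope G := by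
  refine convexHull_min ?_ convex_qstabPolytope
  rintro _ ⟨S, hS, rfl⟩
  refine ⟨fun v => by dsimp only; split_ifs <;> norm_num, fun K hK => ?_⟩
  rw [sum_boole, filter_mem_eq_inter]
  exact_mod_cast hS.card_inter_le_one hK

lemma isClosed_stabPolytope : IsClosed (stabPolytope G) := by
  refine Set.Finite.isClosed_convexHull ℝ <|
    (Set.finite_range fun S : Finset V => fun v => if v ∈ S then (1 : ℝ) else 0).subset ?_
  rintro _ ⟨S, -, rfl⟩
  exact ⟨S, rfl⟩

lemma IsWeightedColoring.div_mem_stabPolytope {p : V → ℕ} {q : ℕ} {A : Fin q → Finset V}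
    (hA : IsWeightedColoring G p A) (hq : 0 < q) :
    (fun v => (p v : ℝ) / q) ∈ stabPolytope G := by
  have hx : (fun v => (p v : ℝ) / q) = ∑ i, (1 / q : ℝ) • fun v => if v ∈ A i then 1 else 0 := by
    ext v
    simp only [Finset.sum_apply, Pi.smul_apply, smul_eq_mul, ← mul_sum, sum_boole,
      hA.card_filter_mem]
    ring
  rw [hx]
  refine (convex_convexHull ℝ _).sum_mem (fun _ _ => by positivity) ?_
    fun i _ => subset_convexHull ℝ _ ⟨A i, hA.isStableSet i, rfl⟩
  simp [hq.ne']

lemma HasWeightedColorings.qstabPolytope_subset_stabPolytope (h : HasWeightedColorings G) :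
    qstabPolytope G ⊆ stabPolytope G := by
  intro x hx
  have hlim : Tendsto (fun n : ℕ => fun v => (⌊x v * n⌋₊ : ℝ) / n) atTop (𝓝 x) :=
    tendsto_pi_nhds.2 fun v =>
      (tendsto_nat_floor_mul_div_atTop (hx.1 v).1).comp tendsto_natCast_atTop_atTop
  refine isClosed_stabPolytope.mem_of_tendsto hlim (eventually_atTop.2 ⟨1, fun n hn => ?_⟩)
  obtain ⟨A, hA⟩ := h (fun v => ⌊x v * n⌋₊) n fun K hK => by
    have : ((∑ v ∈ K, ⌊x v * n⌋₊ : ℕ) : ℝ) ≤ n := by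
      push_cast
      calc ∑ v ∈ K, (⌊x v * n⌋₊ : ℝ) ≤ ∑ v ∈ K, x v * n :=
            sum_le_sum fun v _ => Nat.floor_le (mul_nonneg (hx.1 v).1 n.cast_nonneg)
        _ = (∑ v ∈ K, x v) * n := (sum_mul ..).symm
        _ ≤ n := mul_le_of_le_one_left n.cast_nonneg (hx.2 K hK)
    exact_mod_cast this
  exact hA.div_mem_stabPolytope hn

/-- Maximum principle for `y ↦ ∑ K ∈ 𝒦, ∑ v ∈ K, y v`, which is at most `#𝒦` on stable sets, with
equality only for those meeting every clique of `𝒦`. -/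
lemma exists_isStableSet_forall_inter_nonempty {x : V → ℝ} (hx : x ∈ stabPolytope G)
    {𝒦 : Finset (Finset V)} (h𝒦 : ∀ K ∈ 𝒦, G.IsClique (K : Set V))
    (hx𝒦 : ∀ K ∈ 𝒦, ∑ v ∈ K, x v = 1) :
    ∃ T, IsStableSet G T ∧ ∀ K ∈ 𝒦, (K ∩ T).Nonempty := by
  let f : (V → ℝ) →ₗ[ℝ] ℝ := ∑ K ∈ 𝒦, ∑ v ∈ K, LinearMap.proj v
  have hf : ∀ y, f y = ∑ K ∈ 𝒦, ∑ v ∈ K, y v := fun y => by simp [f]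
  obtain ⟨_, ⟨T, hT, rfl⟩, hxT⟩ :=
    (f.convexOn convex_univ).exists_ge_of_mem_convexHull (Set.subset_univ _) hx
  refine ⟨T, hT, fun K hK => card_pos.1 ?_⟩
  have hle : ∀ K ∈ 𝒦, #(K ∩ T) ≤ 1 := fun K hK => hT.card_inter_le_one (h𝒦 K hK)
  have hge : ∑ _K ∈ 𝒦, 1 ≤ ∑ K ∈ 𝒦, #(K ∩ T) := by
    rw [hf, hf, sum_congr rfl hx𝒦] at hxT
    simp only [sum_boole, filter_mem_eq_inter] at hxT
    exact_mod_cast hxT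
  have := (sum_eq_sum_iff_of_le hle).1 (le_antisymm (sum_le_sum hle) hge) K hK
  omega

lemma exists_isTightCliqueTransversal_of_qstabPolytope_eq
    (hQ : qstabPolytope G = stabPolytope G) {p : V → ℕ} {q : ℕ}
    (hp : IsCliqueWeightBound G p (q + 1)) : ∃ T, IsTightCliqueTransversal G p (q + 1) T := by
  classical
  let 𝒦 : Finset (Finset V) := {K | G.IsClique (K : Set V) ∧ ∑ v ∈ K, p v = q + 1}
  have hx := hQ ▸ div_mem_qstabPolytope hp
  obtain ⟨T, hT, hT𝒦⟩ := exists_isStableSet_forall_inter_nonempty hx (𝒦 := 𝒦)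
    (fun K hK => (mem_filter.1 hK).2.1) fun K hK => by
      rw [← sum_div, div_eq_one_iff_eq (by positivity)]
      exact_mod_cast (mem_filter.1 hK).2.2
  refine ⟨{v ∈ T | p v ≠ 0}, fun a ha b hb => hT a (mem_filter.1 ha).1 b (mem_filter.1 hb).1,
    fun v hv => (mem_filter.1 hv).2, fun K hK hKq => ?_⟩
  -- `K` restricted to the support of `p` still lies in `𝒦`, so `T` meets it where `p ≠ 0`.
  obtain ⟨v, hv⟩ := hT𝒦 {v ∈ K | p v ≠ 0} (mem_filter.2 ⟨mem_univ _,
    hK.subset (coe_subset.2 (filter_subset _ K)), by rwa [sum_filter_ne_zero]⟩)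
  simp only [mem_inter, mem_filter] at hv
  exact ⟨v, mem_inter.2 ⟨hv.1.1, mem_filter.2 ⟨hv.2, hv.1.2⟩⟩⟩

theorem qstabPolytope_eq_stabPolytope_iff_hasWeightedColorings :
    qstabPolytope G = stabPolytope G ↔ HasWeightedColorings G :=
  ⟨fun hQ => HasWeightedColorings.of_exists_isTightCliqueTransversal fun _ _ hp =>
      exists_isTightCliqueTransversal_of_qstabPolytope_eq hQ hp,
    fun h => h.qstabPolytope_subset_stabPolytope.antisymm stabPolytope_subset_qstabPolytope⟩

end Polytope

section Perfect

lemma cliqueNumber_eq_cliqueNum [Finite V] (G : SimpleGraph V) :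
    cliqueNumber G = G.cliqueNum := by
  refine le_antisymm (sSup_le ?_) (le_sSup ⟨_, G.exists_isNClique_cliqueNum, rfl⟩)
  rintro _ ⟨n, ⟨K, hK⟩, rfl⟩
  exact Nat.cast_le.2 <| hK.card_eq ▸ hK.isClique.card_le_cliqueNum

lemma chromaticNumber_eq_cliqueNumber_iff [Finite V] (G : SimpleGraph V) :
    G.chromaticNumber = cliqueNumber G ↔ G.Colorable G.cliqueNum := by
  rw [cliqueNumber_eq_cliqueNum, ← chromaticNumber_le_iff_colorable]
  exact ⟨le_of_eq, fun h => h.antisymm G.cliqueNum_le_chromaticNumber⟩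

variable [Fintype V] {G : SimpleGraph V} {S : Set V} {q : ℕ}

lemma cliqueNum_induce_le_iff :
    (G.induce S).cliqueNum ≤ q ↔ IsCliqueWeightBound G (S.indicator 1) q := by
  classical
  constructor
  · intro h K hK
    have hsub : (G.induce S).IsNClique #(K.subtype (· ∈ S)) (K.subtype (· ∈ S)) := by
      rw [isNClique_induce_iff, subtype_map]
      exact ⟨hK.subset (coe_subset.2 (filter_subset _ K)), by rw [card_subtype]⟩
    have hsum : ∑ v ∈ K, S.indicator 1 v = #(K.subtype (· ∈ S)) := by
      simp [Set.indicator_apply, card_subtype]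
    exact hsum ▸ hsub.isClique.card_le_cliqueNum.trans h
  · intro h
    obtain ⟨t, ht⟩ := (G.induce S).exists_isNClique_cliqueNum
    rw [isNClique_induce_iff] at ht
    have hsum : ∑ v ∈ t.map (.subtype _), S.indicator 1 v = #t := by
      simp [Set.indicator_of_mem]
    rw [← ht.card_eq, card_map, ← hsum]
    exact h _ ht.isClique

variable [DecidableEq V]

lemma colorable_induce_iff_weightedColorable :
    (G.induce S).Colorable q ↔ WeightedColorable G (S.indicator 1) q := by
  classical
  constructor
  · rintro ⟨C⟩
    refine ⟨fun i => {v | ∃ hv : v ∈ S, C ⟨v, hv⟩ = i}, ⟨?_, fun v => ?_⟩⟩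
    · intro i u hu v hv huv
      simp only [mem_filter, mem_univ, true_and] at hu hv
      obtain ⟨hu, rfl⟩ := hu
      obtain ⟨hv, hCv⟩ := hv
      exact C.valid (show (G.induce S).Adj ⟨u, hu⟩ ⟨v, hv⟩ from huv) hCv.symm
    · by_cases hv : v ∈ S
      · rw [Set.indicator_of_mem hv, Pi.one_apply, card_eq_one]
        exact ⟨C ⟨v, hv⟩, by ext; simp [hv, eq_comm]⟩
      · simp [hv]
  · rintro ⟨A, hA⟩
    choose c hc using fun v : S => hA.exists_mem (v := v) (by simp [v.2])
    exact ⟨Coloring.mk c fun {u v} huv hcuv => hA.isStableSet (c u) u (hc u) v (hcuv ▸ hc v) huv⟩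

lemma isPerfect_iff_hasWeightedColorings : IsPerfect G ↔ HasWeightedColorings G := by
  have : IsPerfect G ↔ ∀ (S : Set V) q, IsCliqueWeightBound G (S.indicator 1) q →
      WeightedColorable G (S.indicator 1) q := by
    simp only [IsPerfect, chromaticNumber_eq_cliqueNumber_iff, ← cliqueNum_induce_le_iff,
      ← colorable_induce_iff_weightedColorable]
    exact forall_congr' fun S => ⟨fun h q hq => h.mono hq, fun h => h _ le_rfl⟩
  rw [this]
  exact ⟨HasWeightedColorings.of_indicator, fun h S q => h _ q⟩

end Perfect

/-- A finite simple graph `G` is perfect iff the solution set of the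
box and clique constraints equals STAB(G). -/
theorem isPerfect_iff_qstab_eq_stab {V : Type*} [Fintype V] [DecidableEq V]
    (G : SimpleGraph V) :
    IsPerfect G ↔ qstabPolytope G = stabPolytope G :=
  isPerfect_iff_hasWeightedColorings.trans
    qstabPolytope_eq_stabPolytope_iff_hasWeightedColorings.symm

end TPerfection
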